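/- Every real-valued Banach limit L : ℓ^∞(ℝ) → ℝ satisfies |L(a)| ≤ w(T_a) for all bounded real sequences a. -/

import Mathlib

set_option maxHeartbeats 1000000

open Filter Finset Topology

/-- The numerical range of the weighted forward shift `T_a` on `ℓ²`:
values `⟨T_a x, x⟩ = ∑ a_k x_k conj (x_{k+1})` over unit vectors `x ∈ ℓ²`. -/
noncomputable def numRange (a : ℕ → ℂ) : Set ℂ :=
  {z | ∃ x : ℕ → ℂ, (∑' k, ‖x k‖ ^ 2) = (1 : ℝ) ∧
    z = ∑' k, a k * x k * (starRingEnd ℂ) (x (k + 1))}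

/-- The numerical radius `w(T_a)` of the weighted forward shift. -/
noncomputable def numRad (a : ℕ → ℂ) : ℝ := sSup ((fun z : ℂ => ‖z‖) '' numRange a)

/-- `a ∈ ℓ^∞`. -/
def IsBddSeq (a : ℕ → ℂ) : Prop := ∃ C : ℝ, ∀ k, ‖a k‖ ≤ C

/-- The uniform norm `‖a‖_∞`. -/
noncomputable def supNorm (a : ℕ → ℂ) : ℝ := ⨆ k, ‖a k‖

/-- `sup_{j ∈ ℕ} (1/n) ∑_{k=1}^n |a_{k+j-1}|` (0-based indexing). -/
noncomputable def avgSup (a : ℕ → ℂ) (n : ℕ) : ℝ :=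
  ⨆ j : ℕ, (∑ k ∈ Finset.range n, ‖a (k + j)‖) / n

/-- `sup_{j ∈ ℕ} (∏_{k=1}^n |a_{k+j-1}|)^{1/n}` (0-based indexing). -/
noncomputable def prodSup (a : ℕ → ℂ) (n : ℕ) : ℝ :=
  ⨆ j : ℕ, (∏ k ∈ Finset.range n, ‖a (k + j)‖) ^ ((1 : ℝ) / n)

lemma zero_mem_numRange (a : ℕ → ℂ) : (0 : ℂ) ∈ numRange a := by
  refine ⟨fun k => if k = 0 then 1 else 0, ?_, ?_⟩
  · rw [tsum_eq_single 0]
    · simp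
    · intro b hb; simp [hb]
  · have h : ∀ k : ℕ, a k * (fun k => if k = 0 then (1:ℂ) else 0) k *
        (starRingEnd ℂ) ((fun k => if k = 0 then (1:ℂ) else 0) (k + 1)) = 0 := by
      intro k; simp
    rw [funext h, tsum_zero]

lemma numRange_bddAbove {a : ℕ → ℂ} {C : ℝ} (hC : ∀ k, ‖a k‖ ≤ C) :
    BddAbove ((fun z : ℂ => ‖z‖) '' numRange a) := by
  have hC0 : 0 ≤ C := le_trans (norm_nonneg _) (hC 0)
  refine ⟨C, ?_⟩
  rintro r ⟨z, ⟨x, hx1, rfl⟩, rfl⟩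
  have hxsum : Summable (fun k => ‖x k‖ ^ 2) := by
    by_contra h
    rw [tsum_eq_zero_of_not_summable h] at hx1
    norm_num at hx1
  have hxsum' : Summable (fun k => ‖x (k + 1)‖ ^ 2) :=
    hxsum.comp_injective (fun m n h => by omega)
  have hbound : ∀ k, ‖a k * x k * (starRingEnd ℂ) (x (k + 1))‖ ≤
      C / 2 * (‖x k‖ ^ 2 + ‖x (k + 1)‖ ^ 2) := by
    intro k
    rw [norm_mul, norm_mul, RingHomIsometric.norm_map]
    have h1 : ‖a k‖ * ‖x k‖ * ‖x (k + 1)‖ ≤ C * (‖x k‖ * ‖x (k + 1)‖) := by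
      rw [mul_assoc]
      exact mul_le_mul_of_nonneg_right (hC k) (by positivity)
    nlinarith [sq_nonneg (‖x k‖ - ‖x (k + 1)‖), norm_nonneg (x k), norm_nonneg (x (k+1))]
  have hsum2 : Summable (fun k => C / 2 * (‖x k‖ ^ 2 + ‖x (k + 1)‖ ^ 2)) :=
    ((hxsum.add hxsum').mul_left _)
  have hsumnorm : Summable (fun k => ‖a k * x k * (starRingEnd ℂ) (x (k + 1))‖) :=
    Summable.of_nonneg_of_le (fun k => norm_nonneg _) hbound hsum2
  calc ‖∑' k, a k * x k * (starRingEnd ℂ) (x (k + 1))‖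
      ≤ ∑' k, ‖a k * x k * (starRingEnd ℂ) (x (k + 1))‖ := norm_tsum_le_tsum_norm hsumnorm
    _ ≤ ∑' k, C / 2 * (‖x k‖ ^ 2 + ‖x (k + 1)‖ ^ 2) := Summable.tsum_le_tsum hbound hsumnorm hsum2
    _ = C / 2 * ((∑' k, ‖x k‖ ^ 2) + ∑' k, ‖x (k + 1)‖ ^ 2) := by
        rw [tsum_mul_left, Summable.tsum_add hxsum hxsum']
    _ ≤ C / 2 * (1 + 1) := by
        have h2 : ∑' k, ‖x (k + 1)‖ ^ 2 ≤ ∑' k, ‖x k‖ ^ 2 := by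
          have := Summable.tsum_eq_zero_add hxsum
          have h0 : (0:ℝ) ≤ ‖x 0‖ ^ 2 := by positivity
          linarith
        apply mul_le_mul_of_nonneg_left _ (by positivity)
        linarith
    _ = C := by ring

lemma numRad_nonneg {a : ℕ → ℂ} {C : ℝ} (hC : ∀ k, ‖a k‖ ≤ C) : 0 ≤ numRad a :=
  le_csSup (numRange_bddAbove hC) ⟨0, zero_mem_numRange a, norm_zero⟩

lemma avg_le_numRad {b : ℕ → ℝ} {C : ℝ} (hC : ∀ k, ‖((b k : ℝ) : ℂ)‖ ≤ C) (n j : ℕ) :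
    |∑ k ∈ Finset.range n, b (j + k)| / (n + 1) ≤ numRad (fun k => ((b k : ℝ) : ℂ)) := by
  set c : ℝ := Real.sqrt ((n + 1 : ℝ)⁻¹) with hcdef
  have hc2 : c ^ 2 = (n + 1 : ℝ)⁻¹ := Real.sq_sqrt (by positivity)
  have hc0 : 0 ≤ c := Real.sqrt_nonneg _
  set x : ℕ → ℂ := fun k => if k ∈ Finset.Icc j (j + n) then (c : ℂ) else 0 with hxdef
  have h1 : (∑' k, ‖x k‖ ^ 2) = (1 : ℝ) := by
    rw [tsum_eq_sum (s := Finset.Icc j (j + n))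
      (by intro k hk; simp only [hxdef, if_neg hk]; simp)]
    have : ∀ k ∈ Finset.Icc j (j + n), ‖x k‖ ^ 2 = (n + 1 : ℝ)⁻¹ := by
      intro k hk
      simp only [hxdef, if_pos hk, Complex.norm_real, Real.norm_eq_abs, sq_abs, hc2]
    rw [Finset.sum_congr rfl this, Finset.sum_const, Nat.card_Icc]
    have : j + n + 1 - j = n + 1 := by omega
    rw [this]
    rw [nsmul_eq_mul]; push_cast; exact mul_inv_cancel₀ (by positivity)
  set z : ℂ := ∑' k, ((b k : ℝ) : ℂ) * x k * (starRingEnd ℂ) (x (k + 1)) with hzdef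
  have h2 : z = (((n + 1 : ℝ)⁻¹ * ∑ k ∈ Finset.range n, b (j + k) : ℝ) : ℂ) := by
    rw [hzdef, tsum_eq_sum (s := Finset.Ico j (j + n)) ?_]
    · have : ∀ k ∈ Finset.Ico j (j + n),
          ((b k : ℝ) : ℂ) * x k * (starRingEnd ℂ) (x (k + 1)) = ((c ^ 2 * b k : ℝ) : ℂ) := by
        intro k hk
        simp only [Finset.mem_Ico] at hk
        have hk1 : k ∈ Finset.Icc j (j + n) := by simp; omega
        have hk2 : k + 1 ∈ Finset.Icc j (j + n) := by simp; omega
        simp only [hxdef, if_pos hk1, if_pos hk2, Complex.conj_ofReal]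
        push_cast
        ring
      rw [Finset.sum_congr rfl this, ← Complex.ofReal_sum]
      rw [Finset.sum_Ico_eq_sum_range]
      have : j + n - j = n := by omega
      rw [this, ← Finset.mul_sum, hc2]
    · intro k hk
      simp only [Finset.mem_Ico, not_and, not_lt] at hk
      rcases lt_or_ge k j with h | h
      · have : x k = 0 := by simp [hxdef]; omega
        simp [this]
      · have : x (k + 1) = 0 := by simp [hxdef]; omega
        simp [this]
  have hz : z ∈ numRange (fun k => ((b k : ℝ) : ℂ)) := ⟨x, h1, rfl⟩
  have hle : ‖z‖ ≤ numRad (fun k => ((b k : ℝ) : ℂ)) :=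
    le_csSup (numRange_bddAbove hC) ⟨z, hz, rfl⟩
  have : ‖z‖ = |∑ k ∈ Finset.range n, b (j + k)| / (n + 1) := by
    rw [h2, Complex.norm_real, Real.norm_eq_abs, abs_mul]
    rw [abs_of_nonneg (by positivity : (0:ℝ) ≤ (n + 1 : ℝ)⁻¹)]
    rw [inv_mul_eq_div]
  linarith

/-- The `j`-fold backward shift of an element of `ℓ^∞`. -/
noncomputable def BLshift (a : lp (fun _ : ℕ => ℝ) ⊤) (j : ℕ) : lp (fun _ : ℕ => ℝ) ⊤ :=
  ⟨fun k => a (k + j), by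
    show Memℓp _ ⊤
    rw [memℓp_infty_iff]
    refine BddAbove.mono ?_ (memℓp_infty_iff.1 (lp.memℓp a))
    rintro _ ⟨k, rfl⟩
    exact ⟨k + j, rfl⟩⟩

lemma BLshift_apply (a : lp (fun _ : ℕ => ℝ) ⊤) (j k : ℕ) : (BLshift a j) k = a (k + j) := rfl

lemma L_BLshift (L : lp (fun _ : ℕ => ℝ) ⊤ →ₗ[ℝ] ℝ)
    (hshift : ∀ a b : lp (fun _ : ℕ => ℝ) ⊤, (∀ k, b k = a (k + 1)) → L a = L b)
    (a : lp (fun _ : ℕ => ℝ) ⊤) (j : ℕ) : L (BLshift a j) = L a := by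
  induction j with
  | zero =>
    have h0 : BLshift a 0 = a := Subtype.ext (funext fun k => rfl)
    rw [h0]
  | succ j ih =>
    rw [← ih]
    exact (hshift (BLshift a j) (BLshift a (j + 1))
      (fun k => congrArg a (by omega))).symm

theorem stmt15 (L : lp (fun _ : ℕ => ℝ) ⊤ →ₗ[ℝ] ℝ)
    (hshift : ∀ a b : lp (fun _ : ℕ => ℝ) ⊤, (∀ k, b k = a (k + 1)) → L a = L b)
    (hpos : ∀ a : lp (fun _ : ℕ => ℝ) ⊤, (∀ k, 0 ≤ a k) → 0 ≤ L a)
    (hone : ∀ a : lp (fun _ : ℕ => ℝ) ⊤, (∀ k, a k = 1) → L a = 1)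
    (hbd : ∀ a : lp (fun _ : ℕ => ℝ) ⊤, |L a| ≤ ‖a‖)
    (hlim : ∀ (a : lp (fun _ : ℕ => ℝ) ⊤) (l : ℝ),
      Tendsto (fun k => a k) atTop (𝓝 l) → L a = l) :
    ∀ a : lp (fun _ : ℕ => ℝ) ⊤, |L a| ≤ numRad (fun k => ((a k : ℝ) : ℂ)) := by
  intro a
  obtain ⟨M, hM⟩ := memℓp_infty_iff.1 (lp.memℓp a)
  have hC : ∀ k, ‖(((a k : ℝ)) : ℂ)‖ ≤ M := by
    intro k
    rw [Complex.norm_real]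
    exact hM ⟨k, rfl⟩
  set W := numRad (fun k => ((a k : ℝ) : ℂ)) with hWdef
  have hW0 : 0 ≤ W := numRad_nonneg hC
  have key : ∀ n : ℕ, 1 ≤ n → |L a| ≤ ((n : ℝ) + 1) / n * W := by
    intro n hn
    have hn0 : (0 : ℝ) < n := by exact_mod_cast hn
    set Av : lp (fun _ : ℕ => ℝ) ⊤ := (n : ℝ)⁻¹ • ∑ j ∈ Finset.range n, BLshift a j with hAv
    have hLAv : L Av = L a := by
      rw [hAv, map_smul, map_sum, smul_eq_mul]
      have : ∀ j ∈ Finset.range n, L (BLshift a j) = L a :=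
        fun j _ => L_BLshift L hshift a j
      rw [Finset.sum_congr rfl this, Finset.sum_const, Finset.card_range, nsmul_eq_mul]
      field_simp
    have hcoord : ∀ k, ‖Av k‖ ≤ ((n : ℝ) + 1) / n * W := by
      intro k
      have hAvk : Av k = (n : ℝ)⁻¹ * ∑ j ∈ Finset.range n, a (k + j) := by
        rw [hAv, lp.coeFn_smul, Pi.smul_apply, lp.coeFn_sum, Finset.sum_apply]
        simp [BLshift_apply, smul_eq_mul, Nat.add_comm]
      have havg := avg_le_numRad hC n k
      rw [hAvk, Real.norm_eq_abs, abs_mul, abs_of_nonneg (by positivity : (0:ℝ) ≤ (n:ℝ)⁻¹)]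
      have h1 : |∑ j ∈ Finset.range n, a (k + j)| ≤ ((n : ℝ) + 1) * W := by
        rw [div_le_iff₀ (by positivity)] at havg
        linarith
      calc (n : ℝ)⁻¹ * |∑ j ∈ Finset.range n, a (k + j)|
          ≤ (n : ℝ)⁻¹ * (((n : ℝ) + 1) * W) :=
            mul_le_mul_of_nonneg_left h1 (by positivity)
        _ = ((n : ℝ) + 1) / n * W := by field_simp
    have hnorm : ‖Av‖ ≤ ((n : ℝ) + 1) / n * W :=
      lp.norm_le_of_forall_le (by positivity) hcoord
    calc |L a| = |L Av| := by rw [hLAv]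
      _ ≤ ‖Av‖ := hbd Av
      _ ≤ ((n : ℝ) + 1) / n * W := hnorm
  have hten : Tendsto (fun n : ℕ => ((n : ℝ) + 1) / n * W) atTop (𝓝 W) := by
    have h1 : Tendsto (fun n : ℕ => 1 + 1 / (n : ℝ)) atTop (𝓝 (1 + 0)) :=
      tendsto_const_nhds.add tendsto_one_div_atTop_nhds_zero_nat
    have h2 : Tendsto (fun n : ℕ => ((n : ℝ) + 1) / n) atTop (𝓝 1) := by
      have : (1 : ℝ) = 1 + 0 := by ring
      rw [this]
      apply h1.congr'
      filter_upwards [eventually_ge_atTop 1] with n hn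
      have hn0 : (0 : ℝ) < n := by exact_mod_cast hn
      field_simp
      ring
    have := h2.mul_const W
    rwa [one_mul] at this
  exact ge_of_tendsto hten (eventually_atTop.2 ⟨1, key⟩)
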